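/- In ℚ(α,s), with δ = (α-α⁻¹)/(s-s⁻¹)+1, the eigenvalue c_∅ of the empty diagram equals δ, and for every nonempty Young diagram λ, c_λ ≠ δ; i.e. c_λ = δ if and only if λ = ∅. -/

import Mathlib

open scoped BigOperators

noncomputable abbrev Kf : Type := FractionRing (MvPolynomial (Fin 2) ℚ)

noncomputable def α : Kf := algebraMap (MvPolynomial (Fin 2) ℚ) Kf (MvPolynomial.X 0)
noncomputable def s : Kf := algebraMap (MvPolynomial (Fin 2) ℚ) Kf (MvPolynomial.X 1)
noncomputable def δ : Kf := (α - α⁻¹) / (s - s⁻¹) + 1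

/-- content of a cell -/
def cn (c : ℕ × ℕ) : ℤ := (c.2 : ℤ) - (c.1 : ℤ)

/-- the eigenvalue `c_λ` of the Hopf map for a Young diagram -/
noncomputable def cY (lam : YoungDiagram) : Kf :=
  δ + (s - s⁻¹) *
    (α * ∑ c ∈ lam.cells, s ^ (2 * cn c) - α⁻¹ * ∑ c ∈ lam.cells, s ^ (-(2 * cn c)))


/-!
Clearing the denominators `s⁻¹`, `α⁻¹` turns `cY λ = δ` into a polynomial identity
`X₀² P(X₁) = Q(X₁)` where `Q` is a sum of `#λ` monomials in `X₁`; evaluating at `X₀ = 0, X₁ = 1`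
gives `0 = #λ`.
-/

open MvPolynomial

lemma algebraMap_injective :
    Function.Injective (algebraMap (MvPolynomial (Fin 2) ℚ) Kf) :=
  IsFractionRing.injective _ _

lemma α_ne_zero : α ≠ 0 :=
  (map_ne_zero_iff _ algebraMap_injective).2 (X_ne_zero 0)

lemma s_ne_zero : s ≠ 0 :=
  (map_ne_zero_iff _ algebraMap_injective).2 (X_ne_zero 1)

lemma s_sub_s_inv_ne_zero : s - s⁻¹ ≠ 0 := by
  intro h
  have hs_sq : s ^ 2 = 1 := by
    field_simp [s_ne_zero] at h
    linear_combination h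
  have hX_sq : (X 1 ^ 2 : MvPolynomial (Fin 2) ℚ) = 1 :=
    algebraMap_injective (by rw [map_pow, map_one]; exact hs_sq)
  simpa using congrArg (eval 0) hX_sq

lemma pow_mul_sum_zpow_s_eq_algebraMap {ι : Type*} (t : Finset ι) (e : ι → ℤ) (N : ℕ)
    (he : ∀ i ∈ t, 0 ≤ N + e i) :
    s ^ N * ∑ i ∈ t, s ^ e i =
      algebraMap (MvPolynomial (Fin 2) ℚ) Kf (∑ i ∈ t, X 1 ^ (N + e i).toNat) := by
  rw [Finset.mul_sum, map_sum]
  refine Finset.sum_congr rfl fun i hi => ?_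
  rw [← zpow_natCast, ← zpow_add₀ s_ne_zero, map_pow, ← s, ← zpow_natCast,
    Int.toNat_of_nonneg (he i hi)]

lemma eq_empty_of_α_sq_mul_sum_zpow_s_eq {ι κ : Type*} (t : Finset ι) (u : Finset κ)
    (e : ι → ℤ) (f : κ → ℤ) (h : α ^ 2 * ∑ i ∈ t, s ^ e i = ∑ j ∈ u, s ^ f j) : u = ∅ := by
  set N : ℕ := ∑ i ∈ t, (e i).natAbs + ∑ j ∈ u, (f j).natAbs
  have he : ∀ i ∈ t, 0 ≤ N + e i := fun i hi => by
    have := Finset.single_le_sum (f := fun i => (e i).natAbs) (fun _ _ => Nat.zero_le _) hi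
    omega
  have hf : ∀ j ∈ u, 0 ≤ N + f j := fun j hj => by
    have := Finset.single_le_sum (f := fun j => (f j).natAbs) (fun _ _ => Nat.zero_le _) hj
    omega
  have hpoly : (X 0 ^ 2 * ∑ i ∈ t, X 1 ^ (N + e i).toNat : MvPolynomial (Fin 2) ℚ) =
      ∑ j ∈ u, X 1 ^ (N + f j).toNat := by
    apply algebraMap_injective
    rw [map_mul, map_pow, ← pow_mul_sum_zpow_s_eq_algebraMap t e N he,
      ← pow_mul_sum_zpow_s_eq_algebraMap u f N hf, ← h]
    exact mul_left_comm _ _ _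
  have hcard := congrArg (eval ![0, 1]) hpoly
  simp only [map_mul, map_pow, map_sum, eval_X] at hcard
  simpa using hcard.symm

lemma cY_eq_δ_iff (lam : YoungDiagram) :
    cY lam = δ ↔
      α ^ 2 * ∑ c ∈ lam.cells, s ^ (2 * cn c) = ∑ c ∈ lam.cells, s ^ (-(2 * cn c)) := by
  rw [cY, add_eq_left, mul_eq_zero, or_iff_right s_sub_s_inv_ne_zero, sub_eq_zero]
  constructor <;> intro h
  · rw [pow_two, mul_assoc, h, ← mul_assoc, mul_inv_cancel₀ α_ne_zero, one_mul]
  · rw [← h, pow_two, mul_assoc, ← mul_assoc α⁻¹, inv_mul_cancel₀ α_ne_zero, one_mul]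

theorem cY_eq_delta_iff_empty :
    cY ⊥ = δ ∧ ∀ lam : YoungDiagram, cY lam = δ ↔ lam = ⊥ := by
  have hbot : cY ⊥ = δ := by simp [cY, YoungDiagram.cells_bot]
  refine ⟨hbot, fun lam => ⟨fun h => ?_, fun h => h ▸ hbot⟩⟩
  exact YoungDiagram.ext (eq_empty_of_α_sq_mul_sum_zpow_s_eq _ _ _ _ ((cY_eq_δ_iff lam).1 h))
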